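/- arXiv:1205.4177 — 2 statements merged into one kernel-verified Lean document; each statement's English description precedes it below -/
import Mathlib

section
/- Let G be a topological group admitting a connected open neighborhood of the identity, let X ⊆ G be clopen with e ∈ X, and let H(X) = {g ∈ X : g·X = X}. Then H(X) is an open (hence clopen) subgroup of G. -/
/-!
Right translation by a fixed `x` is continuous, so `{g | g * x ∈ X}` is clopen; a connected
neighbourhood `V` of `1` therefore lies entirely inside or entirely outside it, i.e.
`v * x ∈ X ↔ x ∈ X` for all `v ∈ V`. Hence `V` stabilises `X` under left translation, so the
stabiliser of `X` is a subgroup containing a neighbourhood of `1`, hence open and closed.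
Since `1 ∈ X`, every `g` with `g • X = X` lies in `X`, so this stabiliser is exactly `H(X)`.
-/

open Pointwise

section

variable {G : Type*} [TopologicalSpace G]

theorem IsPreconnected.mul_mem_iff_of_isClopen [MulOneClass G] [SeparatelyContinuousMul G]
    {V X : Set G} (hV : IsPreconnected V) (h1V : (1 : G) ∈ V) (hX : IsClopen X)
    {v : G} (hv : v ∈ V) (x : G) : v * x ∈ X ↔ x ∈ X := by
  have hXx : IsClopen ((· * x) ⁻¹' X) :=
    hX.preimage SeparatelyContinuousMul.continuous_mul_const
  by_cases hx : x ∈ X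
  · exact iff_of_true (hV.subset_isClopen hXx ⟨1, h1V, by simpa using hx⟩ hv) hx
  · exact iff_of_false (hV.subset_isClopen hXx.compl ⟨1, h1V, by simpa using hx⟩ hv) hx

theorem IsPreconnected.subset_stabilizer_of_isClopen [Group G] [SeparatelyContinuousMul G]
    {V X : Set G} (hV : IsPreconnected V) (h1V : (1 : G) ∈ V) (hX : IsClopen X) :
    V ⊆ MulAction.stabilizer G X := fun v hv =>
  Set.ext fun y => by
    rw [Set.mem_smul_set_iff_inv_smul_mem, smul_eq_mul,
      ← hV.mul_mem_iff_of_isClopen h1V hX hv, mul_inv_cancel_left]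

end

theorem coe_stabilizer_eq_of_one_mem {G : Type*} [Group G] {X : Set G} (h1 : (1 : G) ∈ X) :
    (MulAction.stabilizer G X : Set G) = {g | g ∈ X ∧ (fun x => g * x) '' X = X} := by
  ext g
  simp only [SetLike.mem_coe, MulAction.mem_stabilizer_iff, Set.mem_ofPred_eq]
  refine ⟨fun hg => ⟨?_, Set.image_smul.trans hg⟩, fun hg => Set.image_smul.symm.trans hg.2⟩
  simpa [hg] using Set.smul_mem_smul_set (a := g) h1

/-- Let `G` be a topological group admitting a connected open neighborhood of the
identity, let `X ⊆ G` be clopen with `1 ∈ X`, and let `H(X) = {g ∈ X : g·X = X}`.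
Then `H(X)` is an open (hence clopen) subgroup of `G`. -/
theorem stmt_2 {G : Type*} [Group G] [TopologicalSpace G] [IsTopologicalGroup G]
    (hconn : ∃ V : Set G, IsOpen V ∧ IsConnected V ∧ (1 : G) ∈ V)
    (X : Set G) (hX : IsClopen X) (h1 : (1 : G) ∈ X) :
    ∃ H : Subgroup G, (H : Set G) = {g | g ∈ X ∧ (fun x => g * x) '' X = X} ∧
      IsOpen (H : Set G) ∧ IsClopen (H : Set G) := by
  obtain ⟨V, hVo, hVc, h1V⟩ := hconn
  have hV : V ⊆ MulAction.stabilizer G X :=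
    hVc.isPreconnected.subset_stabilizer_of_isClopen h1V hX
  have hopen : IsOpen (MulAction.stabilizer G X : Set G) :=
    Subgroup.isOpen_of_mem_nhds _ (Filter.mem_of_superset (hVo.mem_nhds h1V) hV)
  exact ⟨_, coe_stabilizer_eq_of_one_mem h1, hopen,
    Subgroup.isClosed_of_isOpen _ hopen, hopen⟩
end

section
/- Let A be a nonzero finite-dimensional associative ℝ-algebra with no zero divisors whose center contains ℝ. Then A is isomorphic as an ℝ-algebra to ℝ, ℂ, or the quaternions ℍ; in particular its dimension over ℝ is 1, 2, or 4. -/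
/-!
An element `x ∉ ℝ` is a root of its minimal polynomial, an irreducible real quadratic, so
completing the square gives `i = s • (x + r)` with `i * i = -1`. In a domain the centralizer
of such an `i` is `ℝ + ℝ i`: if `u` commutes with `i` and `u * u = -1` then `(u - i) (u + i) = 0`.
Every `v` splits as `(v - i v i) / 2 + (v + i v i) / 2`, a part commuting with `i` plus a part
anticommuting with it. If only `0` anticommutes with `i`, then `A = ℝ + ℝ i ≅ ℂ`. Otherwise a
nonzero anticommuting `z` has `z * z` real and negative, so rescaling `z` gives `j` with
`j * j = -1` and `j i = - i j`; any anticommuting `n` equals `-(n j) j ∈ ℝ j + ℝ i j`, so `A ≅ ℍ`.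
-/

section Ring

variable {A : Type*} [Ring A] [Algebra ℝ A]

theorem exists_commute_add_anticommute {i : A} (hi : i * i = -1) (v : A) :
    ∃ p n : A, Commute p i ∧ n * i = -(i * n) ∧ p + n = v := by
  have hright : i * v * i * i = -(i * v) := by rw [mul_assoc _ i i, hi, mul_neg_one]
  have hleft : i * (i * v * i) = -(v * i) := by
    rw [← mul_assoc, ← mul_assoc, hi, neg_one_mul, neg_mul]
  refine ⟨(2⁻¹ : ℝ) • (v - i * v * i), (2⁻¹ : ℝ) • (v + i * v * i), ?_, ?_, by module⟩
  · rw [Commute, SemiconjBy, smul_mul_assoc, mul_smul_comm, sub_mul, mul_sub, hright, hleft]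
    module
  · rw [smul_mul_assoc, mul_smul_comm, add_mul, mul_add, hright, hleft]
    module

theorem nonempty_algEquiv_real [Nontrivial A] (h : ∀ y : A, y ∈ (algebraMap ℝ A).range) :
    Nonempty (A ≃ₐ[ℝ] ℝ) :=
  ⟨(AlgEquiv.ofBijective (Algebra.ofId ℝ A) ⟨(algebraMap ℝ A).injective, h⟩).symm⟩

end Ring

section NoZeroDivisors

variable {A : Type*} [Ring A] [NoZeroDivisors A] [Algebra ℝ A]

theorem mem_range_algebraMap_of_mul_self_eq {y : A} {D : ℝ} (hD : 0 ≤ D)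
    (h : y * y = D • 1) : y ∈ (algebraMap ℝ A).range := by
  rw [← Real.mul_self_sqrt hD, mul_smul] at h
  have hfactor : (y - √D • 1) * (y + √D • 1) = 0 := by
    simp only [sub_mul, mul_add, h, smul_mul_assoc, mul_smul_comm, one_mul, mul_one]
    module
  rcases mul_eq_zero.1 hfactor with h | h
  · exact ⟨√D, by rw [Algebra.algebraMap_eq_smul_one]; linear_combination (norm := module) -h⟩
  · exact ⟨-√D, by rw [Algebra.algebraMap_eq_smul_one]; linear_combination (norm := module) -h⟩

theorem exists_smul_mul_self_eq_neg_one {y : A} {D : ℝ} (hy : y ∉ (algebraMap ℝ A).range)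
    (h : y * y = D • 1) : ∃ s : ℝ, (s • y) * (s • y) = -1 := by
  have hD : D < 0 := by
    by_contra! hD
    exact hy (mem_range_algebraMap_of_mul_self_eq hD h)
  refine ⟨(√(-D))⁻¹, ?_⟩
  have hsq : (√(-D))⁻¹ * (√(-D))⁻¹ * D = -1 := by
    rw [← mul_inv, Real.mul_self_sqrt (by linarith), inv_neg, neg_mul, inv_mul_cancel₀ hD.ne]
  rw [smul_mul_assoc, mul_smul_comm, smul_smul, h, smul_smul, hsq, neg_one_smul]

end NoZeroDivisors

section Domain

variable {A : Type*} [Ring A] [IsDomain A] [Algebra ℝ A] [FiniteDimensional ℝ A]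

theorem exists_add_smul_one_mul_self_eq {x : A} (hx : x ∉ (algebraMap ℝ A).range) :
    ∃ r D : ℝ, (x + r • 1) * (x + r • 1) = D • 1 := by
  have hint : IsIntegral ℝ x := .of_finite ℝ x
  have hdeg : (minpoly ℝ x).natDegree = 2 :=
    le_antisymm (minpoly.irreducible hint).natDegree_le_two
      ((minpoly.two_le_natDegree_iff hint).2 hx)
  obtain ⟨b, c, hbc⟩ := Polynomial.isMonicOfDegree_two_iff.1 ⟨hdeg, minpoly.monic hint⟩
  have hroot : x * x + b • x + c • 1 = 0 := by
    simpa [hbc, pow_two, Algebra.smul_def] using minpoly.aeval ℝ x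
  refine ⟨b / 2, b ^ 2 / 4 - c, ?_⟩
  simp only [mul_add, add_mul, smul_mul_assoc, mul_smul_comm, one_mul, mul_one]
  linear_combination (norm := module) hroot

theorem exists_smul_add_smul_one_mul_self_eq_neg_one {x : A}
    (hx : x ∉ (algebraMap ℝ A).range) :
    ∃ r s : ℝ, (s • (x + r • 1)) * (s • (x + r • 1)) = -1 := by
  obtain ⟨r, D, h⟩ := exists_add_smul_one_mul_self_eq hx
  have hxr : x + r • 1 ∉ (algebraMap ℝ A).range := by
    rintro ⟨t, ht⟩
    refine hx ⟨t - r, ?_⟩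
    rw [Algebra.algebraMap_eq_smul_one] at ht ⊢
    linear_combination (norm := module) ht
  obtain ⟨s, hs⟩ := exists_smul_mul_self_eq_neg_one hxr h
  exact ⟨r, s, hs⟩

theorem exists_eq_smul_one_add_smul_of_commute {i y : A} (hi : i * i = -1) (hy : Commute y i) :
    ∃ a b : ℝ, y = a • 1 + b • i := by
  by_cases hyr : y ∈ (algebraMap ℝ A).range
  · obtain ⟨t, rfl⟩ := hyr
    exact ⟨t, 0, by rw [Algebra.algebraMap_eq_smul_one, zero_smul, add_zero]⟩
  obtain ⟨r, s, hu⟩ := exists_smul_add_smul_one_mul_self_eq_neg_one hyr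
  set u := s • (y + r • 1)
  have hui : Commute u i := ((hy.add_left ((Commute.one_left i).smul_left r)).smul_left s)
  have hfactor : (u - i) * (u + i) = 0 := by
    rw [sub_mul, mul_add, mul_add, hu, hi, hui.eq]
    abel
  have hs : s ≠ 0 := by
    rintro rfl
    simp [u] at hu
  have hy_eq : y = (-r) • 1 + s⁻¹ • u := by
    simp only [u, smul_smul, inv_mul_cancel₀ hs, one_smul]
    module
  rcases mul_eq_zero.1 hfactor with h | h
  · exact ⟨-r, s⁻¹, by rw [hy_eq, sub_eq_zero.1 h]⟩
  · exact ⟨-r, -s⁻¹, by rw [hy_eq, eq_neg_of_add_eq_zero_left h]; module⟩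

theorem exists_mul_self_eq_neg_one_of_anticommute {i z : A} (hi : i * i = -1) (hz : z ≠ 0)
    (hzi : z * i = -(i * z)) : ∃ j : A, j * j = -1 ∧ j * i = -(i * j) := by
  have hi0 : i ≠ 0 := by
    rintro rfl
    simp at hi
  have hiz0 : i * z ≠ 0 := mul_ne_zero hi0 hz
  have hzz : Commute (z * z) i := by
    rw [Commute, SemiconjBy, mul_assoc, hzi, mul_neg, ← mul_assoc, hzi, neg_mul, neg_neg,
      mul_assoc]
  obtain ⟨a, b, hab⟩ := exists_eq_smul_one_add_smul_of_commute hi hzz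
  -- `z` commutes with `z * z = a + b i` but anticommutes with `i`, which forces `b = 0`.
  have hb : b = 0 := by
    have hcomm : z * (z * z) = (z * z) * z := (mul_assoc z z z).symm
    rw [hab] at hcomm
    simp only [mul_add, add_mul, mul_smul_comm, smul_mul_assoc, mul_one, one_mul, hzi] at hcomm
    have h2 : (2 * b) • (i * z) = 0 := by linear_combination (norm := module) -hcomm
    simpa [hiz0] using h2
  rw [hb, zero_smul, add_zero] at hab
  have hzr : z ∉ (algebraMap ℝ A).range := by
    rintro ⟨t, rfl⟩
    rw [Algebra.commutes] at hzi
    have h2 : (2 : ℝ) • (i * algebraMap ℝ A t) = 0 := by linear_combination (norm := module) hzi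
    simp [hiz0] at h2
  obtain ⟨s, hs⟩ := exists_smul_mul_self_eq_neg_one hzr hab
  exact ⟨s • z, hs, by rw [smul_mul_assoc, mul_smul_comm, hzi, smul_neg]⟩

theorem nonempty_algEquiv_complex {i : A} (hi : i * i = -1)
    (hanti : ∀ n : A, n * i = -(i * n) → n = 0) : Nonempty (A ≃ₐ[ℝ] ℂ) := by
  let f := Complex.liftAux i hi
  refine ⟨(AlgEquiv.ofBijective f ⟨f.toRingHom.injective, fun y => ?_⟩).symm⟩
  obtain ⟨p, n, hp, hn, rfl⟩ := exists_commute_add_anticommute hi y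
  obtain ⟨a, b, rfl⟩ := exists_eq_smul_one_add_smul_of_commute hi hp
  refine ⟨⟨a, b⟩, ?_⟩
  rw [Complex.liftAux_apply, hanti n hn, add_zero, Algebra.algebraMap_eq_smul_one]

theorem nonempty_algEquiv_quaternion {i j : A} (hi : i * i = -1) (hj : j * j = -1)
    (hji : j * i = -(i * j)) : Nonempty (A ≃ₐ[ℝ] Quaternion ℝ) := by
  let q : QuaternionAlgebra.Basis A (-1 : ℝ) 0 (-1) :=
    { i, j, k := i * j
      i_mul_i := by rw [hi, zero_smul, add_zero, neg_one_smul]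
      j_mul_j := by rw [hj, neg_one_smul]
      i_mul_j := rfl
      j_mul_i := by rw [hji, zero_smul, zero_sub] }
  let f : Quaternion ℝ →ₐ[ℝ] A := q.liftHom
  refine ⟨(AlgEquiv.ofBijective f ⟨f.toRingHom.injective, fun v => ?_⟩).symm⟩
  obtain ⟨p, n, hp, hn, rfl⟩ := exists_commute_add_anticommute hi v
  obtain ⟨a, b, rfl⟩ := exists_eq_smul_one_add_smul_of_commute hi hp
  have hnj : Commute (n * j) i := by
    rw [Commute, SemiconjBy, mul_assoc, hji, mul_neg, ← mul_assoc, hn, neg_mul, neg_neg,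
      mul_assoc]
  obtain ⟨c, d, hcd⟩ := exists_eq_smul_one_add_smul_of_commute hi hnj
  have hn_eq : n = -(c • j + d • (i * j)) := by
    have h := congrArg (· * j) hcd
    simp only [mul_assoc, hj, mul_neg_one, add_mul, smul_mul_assoc, one_mul] at h
    linear_combination (norm := module) -h
  refine ⟨⟨a, b, -c, -d⟩, ?_⟩
  change algebraMap ℝ A a + b • i + (-c) • j + (-d) • (i * j) = _
  rw [hn_eq, Algebra.algebraMap_eq_smul_one]
  module

theorem nonempty_algEquiv_real_or_complex_or_quaternion :
    Nonempty (A ≃ₐ[ℝ] ℝ) ∨ Nonempty (A ≃ₐ[ℝ] ℂ) ∨ Nonempty (A ≃ₐ[ℝ] Quaternion ℝ) := by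
  by_cases hA : ∀ y : A, y ∈ (algebraMap ℝ A).range
  · exact .inl (nonempty_algEquiv_real hA)
  push Not at hA
  obtain ⟨x, hx⟩ := hA
  obtain ⟨r, s, hi⟩ := exists_smul_add_smul_one_mul_self_eq_neg_one hx
  generalize s • (x + r • 1) = i at hi
  by_cases hanti : ∀ n : A, n * i = -(i * n) → n = 0
  · exact .inr (.inl (nonempty_algEquiv_complex hi hanti))
  push Not at hanti
  obtain ⟨z, hzi, hz⟩ := hanti
  obtain ⟨j, hj, hji⟩ := exists_mul_self_eq_neg_one_of_anticommute hi hz hzi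
  exact .inr (.inr (nonempty_algEquiv_quaternion hi hj hji))

end Domain

/-- Frobenius' theorem: a nonzero finite-dimensional associative `ℝ`-algebra with no
zero divisors (whose center contains `ℝ`) is isomorphic as an `ℝ`-algebra to `ℝ`,
`ℂ`, or the quaternions `ℍ`; in particular its dimension is `1`, `2`, or `4`. -/
theorem stmt_13 {A : Type*} [Ring A] [Algebra ℝ A] [FiniteDimensional ℝ A] [Nontrivial A]
    (hnzd : ∀ x y : A, x * y = 0 → x = 0 ∨ y = 0) :
    (Nonempty (A ≃ₐ[ℝ] ℝ) ∨ Nonempty (A ≃ₐ[ℝ] ℂ) ∨ Nonempty (A ≃ₐ[ℝ] Quaternion ℝ)) ∧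
    (Module.finrank ℝ A = 1 ∨ Module.finrank ℝ A = 2 ∨ Module.finrank ℝ A = 4) := by
  have : NoZeroDivisors A := ⟨hnzd _ _⟩
  have : IsDomain A := NoZeroDivisors.to_isDomain A
  have hiso := nonempty_algEquiv_real_or_complex_or_quaternion (A := A)
  refine ⟨hiso, ?_⟩
  rcases hiso with ⟨⟨e⟩⟩ | ⟨⟨e⟩⟩ | ⟨⟨e⟩⟩
  · exact .inl (e.toLinearEquiv.finrank_eq.trans (Module.finrank_self ℝ))
  · exact .inr (.inl (e.toLinearEquiv.finrank_eq.trans Complex.finrank_real_complex))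
  · exact .inr (.inr (e.toLinearEquiv.finrank_eq.trans Quaternion.finrank_eq_four))
end
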